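/- arXiv:math/0205284 — 2 statements merged into one kernel-verified Lean document; each statement's English description precedes it below -/
import Mathlib

section
/- Fix a positive integer n and let q = e^{πi/n}, q^{-1/2} = e^{-πi/2n}. Let {e_k : k = 0,...,2n-1} be the standard orthonormal basis of ℂ^{2n}, with indices read modulo 2n. Define antilinear operators J₂ and Ĵ₂ on ℂ^{2n}⊗ℂ^{2n} by J₂(e_k⊗e_ℓ) = q^{kℓ} e_{-k}⊗e_{-ℓ} and Ĵ₂(e_k⊗e_ℓ) = (-1)^k (q^{-1/2})^{k²} e_{-k}⊗e_{k+ℓ}, extended antilinearly. Then J₂ and Ĵ₂ commute: J₂Ĵ₂ = Ĵ₂J₂. -/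
noncomputable section

/-! ### A realization of the Hilbert-space tensor product -/

/-- A realization of the Hilbert-space tensor product `G₀ ≅ E ⊗ F` of two complex
Hilbert spaces: a bilinear map `tmul` whose range spans a dense subspace and which
multiplies inner products. -/
structure HTensor (E F G₀ : Type*) [NormedAddCommGroup E] [InnerProductSpace ℂ E]
    [NormedAddCommGroup F] [InnerProductSpace ℂ F]
    [NormedAddCommGroup G₀] [InnerProductSpace ℂ G₀] where
  tmul : E →ₗ[ℂ] F →ₗ[ℂ] G₀
  inner_tmul : ∀ (x x' : E) (y y' : F),
    (inner ℂ (tmul x y) (tmul x' y') : ℂ) = (inner ℂ x x' : ℂ) * (inner ℂ y y' : ℂ)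
  dense_span : Dense (↑(Submodule.span ℂ (Set.range fun p : E × F => tmul p.1 p.2)) : Set G₀)

namespace HTensor

variable {E F G₀ : Type*} [NormedAddCommGroup E] [InnerProductSpace ℂ E]
  [NormedAddCommGroup F] [InnerProductSpace ℂ F]
  [NormedAddCommGroup G₀] [InnerProductSpace ℂ G₀]

theorem norm_tmul (τ : HTensor E F G₀) (x : E) (y : F) : ‖τ.tmul x y‖ = ‖x‖ * ‖y‖ := by
  have h := τ.inner_tmul x x y y
  rw [inner_self_eq_norm_sq_to_K, inner_self_eq_norm_sq_to_K, inner_self_eq_norm_sq_to_K] at h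
  have h2 : ‖τ.tmul x y‖ ^ 2 = (‖x‖ * ‖y‖) ^ 2 := by
    rw [mul_pow]
    exact_mod_cast h
  have h4 := congrArg Real.sqrt h2
  rwa [Real.sqrt_sq (norm_nonneg _),
    Real.sqrt_sq (mul_nonneg (norm_nonneg _) (norm_nonneg _))] at h4

/-- The continuous linear map `y ↦ x ⊗ y`. -/
def lmul (τ : HTensor E F G₀) (x : E) : F →L[ℂ] G₀ :=
  LinearMap.mkContinuous (τ.tmul x) ‖x‖ fun y => by rw [τ.norm_tmul]

/-- The continuous linear map `x ↦ x ⊗ y`. -/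
def rmul (τ : HTensor E F G₀) (y : F) : E →L[ℂ] G₀ :=
  LinearMap.mkContinuous (τ.tmul.flip y) ‖y‖ fun x => by
    simp only [LinearMap.flip_apply]
    rw [τ.norm_tmul, mul_comm]

/-- `T = A ⊗ B` as an operator on `G₀ ≅ E ⊗ F`. -/
def IsTensorOp (τ : HTensor E F G₀) (A : E →L[ℂ] E) (B : F →L[ℂ] F)
    (T : G₀ →L[ℂ] G₀) : Prop :=
  ∀ x y, T (τ.tmul x y) = τ.tmul (A x) (B y)

end HTensor

/-- `S` is the flip (tensor swap) unitary `Σ` on `H2 ≅ H ⊗ H`. -/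
def IsFlip {H H2 : Type*} [NormedAddCommGroup H] [InnerProductSpace ℂ H]
    [NormedAddCommGroup H2] [InnerProductSpace ℂ H2]
    (τ : HTensor H H H2) (S : H2 →L[ℂ] H2) : Prop :=
  ∀ x y, S (τ.tmul x y) = τ.tmul y x

/-! ### σ-weakly continuous functionals and the σ-weak topology -/

/-- A linear functional on `B(E)` is normal (σ-weakly continuous) when it is of the
form `x ↦ ∑ₙ ⟪x ξₙ, ηₙ⟫` with `∑ₙ ‖ξₙ‖ ‖ηₙ‖ < ∞`. -/
def IsNormalFunctional {E : Type*} [NormedAddCommGroup E] [InnerProductSpace ℂ E]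
    (ω : (E →L[ℂ] E) →ₗ[ℂ] ℂ) : Prop :=
  ∃ ξ η : ℕ → E, Summable (fun n => ‖ξ n‖ * ‖η n‖) ∧
    ∀ x : E →L[ℂ] E, HasSum (fun n => (inner ℂ (x (ξ n)) (η n) : ℂ)) (ω x)

/-- The σ-weak topology on `B(E)`: the topology induced by all normal functionals. -/
def sigmaWeak (E : Type*) [NormedAddCommGroup E] [InnerProductSpace ℂ E] :
    TopologicalSpace (E →L[ℂ] E) :=
  TopologicalSpace.induced
    (fun x => fun ω : {ω : (E →L[ℂ] E) →ₗ[ℂ] ℂ // IsNormalFunctional ω} => ω.1 x)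
    inferInstance

/-- σ-weak closure of a set of operators. -/
def sigmaWeakClosure {E : Type*} [NormedAddCommGroup E] [InnerProductSpace ℂ E]
    (A : Set (E →L[ℂ] E)) : Set (E →L[ℂ] E) :=
  @closure _ (sigmaWeak E) A

/-- σ-weak density of a set of operators. -/
def SigmaWeaklyDense {E : Type*} [NormedAddCommGroup E] [InnerProductSpace ℂ E]
    (A : Set (E →L[ℂ] E)) : Prop :=
  @Dense _ (sigmaWeak E) A

/-- The von Neumann algebra generated by a set of operators : the double commutant
of the ∗-closed set generated by it. -/
def vnGen {E : Type*} [NormedAddCommGroup E] [InnerProductSpace ℂ E] [CompleteSpace E]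
    (A : Set (E →L[ℂ] E)) : Set (E →L[ℂ] E) :=
  Set.centralizer (Set.centralizer (A ∪ star '' A))

/-! ### Slice maps -/

section Slices

variable {H H2 : Type*} [NormedAddCommGroup H] [InnerProductSpace ℂ H] [CompleteSpace H]
  [NormedAddCommGroup H2] [InnerProductSpace ℂ H2] [CompleteSpace H2]

/-- `s = (ι ⊗ ω)(W)` : the right slice of `W ∈ B(H ⊗ H)` against `ω`. -/
def IsRightSlice (τ : HTensor H H H2) (W : H2 →L[ℂ] H2)
    (ω : (H →L[ℂ] H) →ₗ[ℂ] ℂ) (s : H →L[ℂ] H) : Prop :=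
  ∀ x x' : H, (inner ℂ (s x) x' : ℂ) =
    ω ((ContinuousLinearMap.adjoint (τ.lmul x')).comp (W.comp (τ.lmul x)))

/-- `s = (ω ⊗ ι)(W)` : the left slice of `W ∈ B(H ⊗ H)` against `ω`. -/
def IsLeftSlice (τ : HTensor H H H2) (W : H2 →L[ℂ] H2)
    (ω : (H →L[ℂ] H) →ₗ[ℂ] ℂ) (s : H →L[ℂ] H) : Prop :=
  ∀ y y' : H, (inner ℂ (s y) y' : ℂ) =
    ω ((ContinuousLinearMap.adjoint (τ.rmul y')).comp (W.comp (τ.rmul y)))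

/-- `S(W) = {(ι ⊗ ω)(W) : ω ∈ B(H)_*}`. -/
def Sset (τ : HTensor H H H2) (W : H2 →L[ℂ] H2) : Set (H →L[ℂ] H) :=
  {s | ∃ ω, IsNormalFunctional ω ∧ IsRightSlice τ W ω s}

/-- `Ŝ(W) = {(ω ⊗ ι)(W) : ω ∈ B(H)_*}`. -/
def ShatSet (τ : HTensor H H H2) (W : H2 →L[ℂ] H2) : Set (H →L[ℂ] H) :=
  {s | ∃ ω, IsNormalFunctional ω ∧ IsLeftSlice τ W ω s}

end Slices

/-! ### The threefold tensor product and leg numbering -/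

/-- A realization of the threefold Hilbert tensor product `H3 ≅ H ⊗ H ⊗ H`. -/
structure HTensor3 (H H3 : Type*) [NormedAddCommGroup H] [InnerProductSpace ℂ H]
    [NormedAddCommGroup H3] [InnerProductSpace ℂ H3] where
  tmul3 : H →ₗ[ℂ] H →ₗ[ℂ] H →ₗ[ℂ] H3
  inner_tmul3 : ∀ x y z x' y' z',
    (inner ℂ (tmul3 x y z) (tmul3 x' y' z') : ℂ) =
      (inner ℂ x x' : ℂ) * (inner ℂ y y' : ℂ) * (inner ℂ z z' : ℂ)
  dense_span3 : Dense (↑(Submodule.span ℂ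
      (Set.range fun p : H × H × H => tmul3 p.1 p.2.1 p.2.2)) : Set H3)

section Legs

variable {H H2 H3 : Type*} [NormedAddCommGroup H] [InnerProductSpace ℂ H]
  [NormedAddCommGroup H2] [InnerProductSpace ℂ H2]
  [NormedAddCommGroup H3] [InnerProductSpace ℂ H3]

/-- `T = W₁₂ = W ⊗ 1`, characterized by matrix coefficients. -/
def Is12 (τ : HTensor H H H2) (τ3 : HTensor3 H H3)
    (W : H2 →L[ℂ] H2) (T : H3 →L[ℂ] H3) : Prop :=
  ∀ x y z x' y' z', (inner ℂ (T (τ3.tmul3 x y z)) (τ3.tmul3 x' y' z') : ℂ) =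
    (inner ℂ (W (τ.tmul x y)) (τ.tmul x' y') : ℂ) * (inner ℂ z z' : ℂ)

/-- `T = W₁₃ = (1 ⊗ Σ)(W ⊗ 1)(1 ⊗ Σ)`, characterized by matrix coefficients. -/
def Is13 (τ : HTensor H H H2) (τ3 : HTensor3 H H3)
    (W : H2 →L[ℂ] H2) (T : H3 →L[ℂ] H3) : Prop :=
  ∀ x y z x' y' z', (inner ℂ (T (τ3.tmul3 x y z)) (τ3.tmul3 x' y' z') : ℂ) =
    (inner ℂ (W (τ.tmul x z)) (τ.tmul x' z') : ℂ) * (inner ℂ y y' : ℂ)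

/-- `T = W₂₃ = 1 ⊗ W`, characterized by matrix coefficients. -/
def Is23 (τ : HTensor H H H2) (τ3 : HTensor3 H H3)
    (W : H2 →L[ℂ] H2) (T : H3 →L[ℂ] H3) : Prop :=
  ∀ x y z x' y' z', (inner ℂ (T (τ3.tmul3 x y z)) (τ3.tmul3 x' y' z') : ℂ) =
    (inner ℂ x x' : ℂ) * (inner ℂ (W (τ.tmul y z)) (τ.tmul y' z') : ℂ)

/-- `T = 1 ⊗ 1 ⊗ m` on `H3`. -/
def Is3 (τ3 : HTensor3 H H3) (m : H →L[ℂ] H) (T : H3 →L[ℂ] H3) : Prop :=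
  ∀ x y z, T (τ3.tmul3 x y z) = τ3.tmul3 x y (m z)

/-- The pentagon equation `W₁₂ W₁₃ W₂₃ = W₂₃ W₁₂`. -/
def Pentagon (τ : HTensor H H H2) (τ3 : HTensor3 H H3) (W : H2 →L[ℂ] H2) : Prop :=
  ∀ W12 W13 W23 : H3 →L[ℂ] H3, Is12 τ τ3 W W12 → Is13 τ τ3 W W13 → Is23 τ τ3 W W23 →
    W12 * W13 * W23 = W23 * W12

end Legs

/-- A multiplicative unitary : a unitary on `H2 ≅ H ⊗ H` satisfying the pentagon equation. -/
def IsMultiplicativeUnitary {H H2 H3 : Type*}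
    [NormedAddCommGroup H] [InnerProductSpace ℂ H]
    [NormedAddCommGroup H2] [InnerProductSpace ℂ H2] [CompleteSpace H2]
    [NormedAddCommGroup H3] [InnerProductSpace ℂ H3]
    (τ : HTensor H H H2) (τ3 : HTensor3 H H3) (W : H2 →L[ℂ] H2) : Prop :=
  W ∈ unitary (H2 →L[ℂ] H2) ∧ Pentagon τ τ3 W

/-- The set `S Ŝ* = {s ŝ* : s ∈ S, ŝ ∈ Ŝ}`. -/
def SShatStar {H H2 : Type*} [NormedAddCommGroup H] [InnerProductSpace ℂ H] [CompleteSpace H]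
    [NormedAddCommGroup H2] [InnerProductSpace ℂ H2] [CompleteSpace H2]
    (τ : HTensor H H H2) (W : H2 →L[ℂ] H2) : Set (H →L[ℂ] H) :=
  {x : H →L[ℂ] H | ∃ s ∈ Sset τ W, ∃ t ∈ ShatSet τ W, x = s * star t}

/-- `W` is trim : the linear span of `S Ŝ*` is σ-weakly dense in `B(H)`. -/
def IsTrim {H H2 : Type*} [NormedAddCommGroup H] [InnerProductSpace ℂ H] [CompleteSpace H]
    [NormedAddCommGroup H2] [InnerProductSpace ℂ H2] [CompleteSpace H2]
    (τ : HTensor H H H2) (W : H2 →L[ℂ] H2) : Prop :=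
  SigmaWeaklyDense ((Submodule.span ℂ (SShatStar τ W) :
      Submodule ℂ (H →L[ℂ] H)) : Set (H →L[ℂ] H))

/-- A quantum group frame `(W, J, Ĵ)` (definition 3.4 of the paper). -/
structure IsQuantumGroupFrame {H H2 H3 : Type*}
    [NormedAddCommGroup H] [InnerProductSpace ℂ H] [CompleteSpace H]
    [NormedAddCommGroup H2] [InnerProductSpace ℂ H2] [CompleteSpace H2]
    [NormedAddCommGroup H3] [InnerProductSpace ℂ H3]
    (τ : HTensor H H H2) (τ3 : HTensor3 H H3) (W : H2 →L[ℂ] H2)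
    (J Jhat : H →SL[starRingEnd ℂ] H) : Prop where
  unitary_mem : W ∈ unitary (H2 →L[ℂ] H2)
  pentagon : Pentagon τ τ3 W
  trim : IsTrim τ W
  J_star : ∀ ξ η : H, (inner ℂ (J ξ) η : ℂ) = (inner ℂ (J η) ξ : ℂ)
  J_sq : ∀ ξ : H, J (J ξ) = ξ
  Jhat_star : ∀ ξ η : H, (inner ℂ (Jhat ξ) η : ℂ) = (inner ℂ (Jhat η) ξ : ℂ)
  Jhat_sq : ∀ ξ : H, Jhat (Jhat ξ) = ξ
  W_star : ∀ K : H2 →SL[starRingEnd ℂ] H2,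
    (∀ x y, K (τ.tmul x y) = τ.tmul (Jhat x) (J y)) →
    ∀ u : H2, (star W) u = K (W (K u))
  JMJ : ∀ x m : H →L[ℂ] H, m ∈ vnGen (Sset τ W) → (∀ ξ, x ξ = J (m (J ξ))) →
    x ∈ Set.centralizer (vnGen (Sset τ W))
  JhatMhatJhat : ∀ x m : H →L[ℂ] H, m ∈ vnGen (ShatSet τ W) → (∀ ξ, x ξ = Jhat (m (Jhat ξ))) →
    x ∈ Set.centralizer (vnGen (ShatSet τ W))

end

/-! Both operators are antilinear, so `J₂Ĵ₂` and `Ĵ₂J₂` are linear and it suffices to compare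
them on the basis vectors `e_k ⊗ e_ℓ`; both send `e_k ⊗ e_ℓ` to a multiple of `e_k ⊗ e_{-k-ℓ}`. Writing all phases as powers of `ζ = e^{πi/2n}`, a primitive `4n`-th root of
unity, the two multiples agree because their exponents differ by a multiple of `4n`: this is a
polynomial identity once `(-k).val` and `(k + ℓ).val` are expressed through `k.val`, `ℓ.val`
modulo `2n`. -/

open Complex ComplexConjugate
open scoped Real

theorem Module.Basis.apply_apply_comm {ι R M : Type*} [Semiring R] [AddCommMonoid M]
    [Module R M] {σ : R →+* R} [RingHomInvPair σ σ] (b : Basis ι R M) (A B : M →ₛₗ[σ] M)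
    (h : ∀ i, A (B (b i)) = B (A (b i))) (v : M) : A (B v) = B (A v) :=
  LinearMap.congr_fun (b.ext (f₁ := A.comp B) (f₂ := B.comp A) h) v

-- `ζ ^ m` for the primitive `4n`-th root of unity `ζ = e^{πi/2n}`: every phase of `J₂` and
-- `Ĵ₂` is a power of `ζ`.
noncomputable def zetaPow (n : ℕ) (m : ℤ) : ℂ := exp (m * (π * I / (2 * n)))

section zetaPow

variable {n : ℕ}

theorem zetaPow_add (a b : ℤ) : zetaPow n (a + b) = zetaPow n a * zetaPow n b := by
  rw [zetaPow, zetaPow, zetaPow, ← exp_add]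
  congr 1
  push_cast
  ring

theorem zetaPow_pow (a : ℤ) (k : ℕ) : zetaPow n a ^ k = zetaPow n (a * k) := by
  rw [zetaPow, zetaPow, ← exp_nat_mul]
  congr 1
  push_cast
  ring

theorem conj_zetaPow (a : ℤ) : conj (zetaPow n a) = zetaPow n (-a) := by
  rw [zetaPow, zetaPow, ← exp_conj]
  congr 1
  simp only [map_mul, map_intCast, map_div₀, conj_ofReal, conj_I, map_ofNat, map_natCast,
    Int.cast_neg]
  ring

theorem zetaPow_eq_of_dvd (hn : n ≠ 0) {a b : ℤ} (h : 4 * (n : ℤ) ∣ a - b) :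
    zetaPow n a = zetaPow n b := by
  obtain ⟨m, hm⟩ := h
  rw [zetaPow, zetaPow, exp_eq_exp_iff_exists_int]
  refine ⟨m, ?_⟩
  rw [show (a : ℂ) = b + 4 * n * m by exact_mod_cast (eq_add_of_sub_eq' hm)]
  field_simp
  ring

theorem exp_pi_I_div_eq_zetaPow (hn : n ≠ 0) : exp (π * I / n) = zetaPow n 2 := by
  rw [zetaPow]
  congr 1
  field_simp
  push_cast
  ring

theorem exp_neg_pi_I_div_eq_zetaPow : exp (-(π * I) / (2 * n)) = zetaPow n (-1) := by
  rw [zetaPow]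
  congr 1
  push_cast
  ring

theorem neg_one_eq_zetaPow (hn : n ≠ 0) : (-1 : ℂ) = zetaPow n (2 * n) := by
  rw [zetaPow, ← exp_pi_mul_I]
  congr 1
  field_simp
  push_cast
  ring

end zetaPow

-- With `K = k.val`, `K' = (-k).val`, `L = l.val`, `S = (k + l).val`, these are the exponents of
-- `ζ` in the coefficients of `J₂Ĵ₂(e_k ⊗ e_ℓ)` and `Ĵ₂J₂(e_k ⊗ e_ℓ)`.
theorem four_mul_dvd_phase_exponent_sub {n K K' L S : ℤ} (hK : 2 * n ∣ K + K')
    (hS : 2 * n ∣ K + L - S) :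
    4 * n ∣ (-(2 * n * K) + K ^ 2 + 2 * K' * S) - (2 * n * K' - K' ^ 2 - 2 * K * L) := by
  obtain ⟨s, hs⟩ := hK
  obtain ⟨t, ht⟩ := hS
  obtain rfl : K' = 2 * n * s - K := by linarith
  obtain rfl : S = K + L - 2 * n * t := by linarith
  exact ⟨s * L - 2 * n * s * t + t * K - n * s + n * s ^ 2, by ring⟩

section Coefficients

variable (n : ℕ)

noncomputable def jCoeff (k l : ZMod (2 * n)) : ℂ := exp (π * I / n) ^ (k.val * l.val)

noncomputable def jHatCoeff (k : ZMod (2 * n)) : ℂ :=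
  (-1) ^ k.val * exp (-(π * I) / (2 * n)) ^ (k.val ^ 2)

theorem conj_jHatCoeff_mul_jCoeff [NeZero (2 * n)] (k l : ZMod (2 * n)) :
    conj (jHatCoeff n k) * jCoeff n (-k) (k + l) = conj (jCoeff n k l) * jHatCoeff n (-k) := by
  have hn : n ≠ 0 := right_ne_zero_of_mul (NeZero.ne (2 * n))
  have hK : ((2 * n : ℕ) : ℤ) ∣ k.val + (-k).val :=
    (ZMod.intCast_zmod_eq_zero_iff_dvd _ _).1 (by push_cast; simp)
  have hS : ((2 * n : ℕ) : ℤ) ∣ k.val + l.val - (k + l).val :=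
    (ZMod.intCast_zmod_eq_zero_iff_dvd _ _).1 (by push_cast; simp)
  push_cast at hK hS
  simp only [jCoeff, jHatCoeff, exp_pi_I_div_eq_zetaPow hn, exp_neg_pi_I_div_eq_zetaPow,
    neg_one_eq_zetaPow hn, zetaPow_pow, conj_zetaPow, ← zetaPow_add]
  apply zetaPow_eq_of_dvd hn
  convert four_mul_dvd_phase_exponent_sub hK hS using 1
  push_cast
  ring

end Coefficients

theorem statement_17_general (n : ℕ) [NeZero (2 * n)]
    (J2 Jhat2 : EuclideanSpace ℂ (ZMod (2 * n) × ZMod (2 * n)) →SL[starRingEnd ℂ]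
      EuclideanSpace ℂ (ZMod (2 * n) × ZMod (2 * n)))
    (hJ2 : ∀ k l : ZMod (2 * n),
      J2 (EuclideanSpace.single (k, l) (1 : ℂ)) =
        Complex.exp (Real.pi * Complex.I / (n : ℂ)) ^ (k.val * l.val) •
          EuclideanSpace.single (-k, -l) (1 : ℂ))
    (hJhat2 : ∀ k l : ZMod (2 * n),
      Jhat2 (EuclideanSpace.single (k, l) (1 : ℂ)) =
        ((-1 : ℂ) ^ k.val *
            Complex.exp (-(Real.pi * Complex.I) / (2 * (n : ℂ))) ^ (k.val ^ 2)) •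
          EuclideanSpace.single (-k, k + l) (1 : ℂ)) :
    ∀ v : EuclideanSpace ℂ (ZMod (2 * n) × ZMod (2 * n)),
      J2 (Jhat2 v) = Jhat2 (J2 v) := by
  refine (EuclideanSpace.basisFun _ ℂ).toBasis.apply_apply_comm J2.toLinearMap
    Jhat2.toLinearMap ?_
  rintro ⟨k, l⟩
  simp only [OrthonormalBasis.coe_toBasis, EuclideanSpace.basisFun_apply,
    ContinuousLinearMap.coe_coe]
  rw [hJhat2, hJ2, map_smulₛₗ, map_smulₛₗ, hJ2, hJhat2, smul_smul, smul_smul, neg_neg, neg_add]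
  exact congrArg (· • _) (conj_jHatCoeff_mul_jCoeff n k l)

/-- with `q = e^{πi/n}` and `q^{-1/2} = e^{-πi/2n}`, the antilinear operators
`J₂(e_k ⊗ e_ℓ) = q^{kℓ} e_{-k} ⊗ e_{-ℓ}` and
`Ĵ₂(e_k ⊗ e_ℓ) = (-1)^k (q^{-1/2})^{k²} e_{-k} ⊗ e_{k+ℓ}` on `ℂ^{2n} ⊗ ℂ^{2n}`
(indices mod `2n`) commute: `J₂ Ĵ₂ = Ĵ₂ J₂`. -/
theorem statement_17 (n : ℕ) (hn : 0 < n) [NeZero (2 * n)]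
    (J2 Jhat2 : EuclideanSpace ℂ (ZMod (2 * n) × ZMod (2 * n)) →SL[starRingEnd ℂ]
      EuclideanSpace ℂ (ZMod (2 * n) × ZMod (2 * n)))
    (hJ2 : ∀ k l : ZMod (2 * n),
      J2 (EuclideanSpace.single (k, l) (1 : ℂ)) =
        Complex.exp (Real.pi * Complex.I / (n : ℂ)) ^ (k.val * l.val) •
          EuclideanSpace.single (-k, -l) (1 : ℂ))
    (hJhat2 : ∀ k l : ZMod (2 * n),
      Jhat2 (EuclideanSpace.single (k, l) (1 : ℂ)) =
        ((-1 : ℂ) ^ k.val *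
            Complex.exp (-(Real.pi * Complex.I) / (2 * (n : ℂ))) ^ (k.val ^ 2)) •
          EuclideanSpace.single (-k, k + l) (1 : ℂ)) :
    ∀ v : EuclideanSpace ℂ (ZMod (2 * n) × ZMod (2 * n)),
      J2 (Jhat2 v) = Jhat2 (J2 v) :=
  statement_17_general n J2 Jhat2 hJ2 hJhat2
end

section
/- Let G be a locally compact group with left Haar measure, K ⊆ G a compact subset, and {E₁, ..., Eₙ} a finite open cover of K. Then there exist functions h₁, ..., hₙ : G → [0,∞) such that: (1) each hᵢ is continuous with compact support contained in Eᵢ; (2) 0 ≤ Σᵢ hᵢ ≤ 1 on G; (3) Σᵢ hᵢ(p) = 1 for every p ∈ K; and (4) each hᵢ is of the form hᵢ(p) = ∫ g(p⁻¹q) fᵢ(q) dq for nonnegative compactly supported continuous functions g, fᵢ on G (so each hᵢ is a coefficient function of the left regular representation, i.e. hᵢ(p) = ⟨λ_{p⁻¹} fᵢ, g⟩ with fᵢ, g ∈ L²(G), and hence hᵢ belongs to the Fourier algebra A(G)). -/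
/-! Take a continuous partition of unity `kᵢ` subordinate to the `Eᵢ` whose sum is `1` on a whole
neighbourhood `O` of `K`, and a bump `g ≥ 0` of integral `1` supported so close to `1` that
`K · supp g ⊆ O` and `supp kᵢ · (supp g)⁻¹ ⊆ Eᵢ`. The coefficient `hᵢ(p) = ∫ g(s) kᵢ(ps) ds`
averages `kᵢ` over `p · supp g`, so it is supported in `Eᵢ`; for `p ∈ K` the sum `∑ᵢ kᵢ` is
identically `1` on `p · supp g`, whence `∑ᵢ hᵢ(p) = ∫ g = 1`. -/

open MeasureTheory Topology Pointwise Function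

section NormalizeSum

variable {X ι : Type*} [Fintype ι]

/-- Dividing by `max 1 (∑ j, φ j)` instead of `∑ j, φ j` keeps the quotients continuous where
all `φ j` vanish, while still normalizing the sum to `1` wherever it is at least `1`. -/
noncomputable def normalizeSum (φ : ι → X → ℝ) (i : ι) (x : X) : ℝ :=
  φ i x / max 1 (∑ j, φ j x)

variable {φ : ι → X → ℝ}

theorem max_one_sum_pos (x : X) : 0 < max 1 (∑ j, φ j x) :=
  one_pos.trans_le (le_max_left _ _)

theorem continuous_normalizeSum [TopologicalSpace X] (hφ : ∀ i, Continuous (φ i)) (i : ι) :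
    Continuous (normalizeSum φ i) :=
  (hφ i).div (continuous_const.max (continuous_finsetSum _ fun j _ => hφ j))
    fun x => (max_one_sum_pos x).ne'

theorem normalizeSum_nonneg (hφ : 0 ≤ φ) (i : ι) : 0 ≤ normalizeSum φ i :=
  fun x => div_nonneg (hφ i x) (max_one_sum_pos x).le

theorem support_normalizeSum (i : ι) : support (normalizeSum φ i) = support (φ i) := by
  ext x
  simp [normalizeSum, (max_one_sum_pos x).ne']

theorem sum_normalizeSum_le_one (x : X) : ∑ i, normalizeSum φ i x ≤ 1 := by
  simp only [normalizeSum, ← Finset.sum_div]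
  rw [div_le_one (max_one_sum_pos x)]
  exact le_max_right _ _

theorem sum_normalizeSum_eq_one {x : X} (hx : 1 ≤ ∑ j, φ j x) : ∑ i, normalizeSum φ i x = 1 := by
  simp only [normalizeSum, ← Finset.sum_div]
  rw [max_eq_right hx]
  exact div_self (one_pos.trans_le hx).ne'

end NormalizeSum

theorem exists_continuous_sum_eq_one_eventually_nhdsSet {X ι : Type*} [TopologicalSpace X]
    [R1Space X] [LocallyCompactSpace X] [Fintype ι] {K : Set X} (hK : IsCompact K)
    {E : ι → Set X} (hE : ∀ i, IsOpen (E i)) (hKE : K ⊆ ⋃ i, E i) :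
    ∃ k : ι → X → ℝ,
      (∀ i, Continuous (k i)) ∧ (∀ i, HasCompactSupport (k i)) ∧ (∀ i, tsupport (k i) ⊆ E i) ∧
      (∀ i, 0 ≤ k i) ∧ (∀ x, ∑ i, k i x ≤ 1) ∧ ∀ᶠ x in 𝓝ˢ K, ∑ i, k i x = 1 := by
  obtain ⟨L, hL, hKL, hLE⟩ := exists_compact_between hK (isOpen_iUnion hE) hKE
  obtain ⟨C, hC, hCE, rfl⟩ :=
    hL.finite_compact_cover Finset.univ E (fun i _ => hE i) (by simpa using hLE)
  choose φ hφ1 hφc hφE hφI using fun i =>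
    exists_continuousMap_one_of_isCompact_subset_isOpen (hC i) (hE i) (hCE i)
  set ψ : ι → X → ℝ := fun i => φ i
  have hψ0 : 0 ≤ ψ := fun i x => (hφI i x).1
  have hsupp (i : ι) : tsupport (normalizeSum ψ i) = tsupport (ψ i) :=
    congrArg closure (support_normalizeSum i)
  refine ⟨normalizeSum ψ, continuous_normalizeSum fun i => (φ i).2,
    fun i => by rw [HasCompactSupport, hsupp]; exact hφc i, fun i => (hsupp i).le.trans (hφE i),
    normalizeSum_nonneg hψ0, sum_normalizeSum_le_one,
    mem_nhdsSet_iff_exists.2 ⟨_, isOpen_interior, hKL, ?_⟩⟩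
  intro x hx
  obtain ⟨i, -, hi⟩ := Set.mem_iUnion₂.1 (interior_subset hx)
  refine sum_normalizeSum_eq_one ?_
  calc (1 : ℝ) = ψ i x := (hφ1 i hi).symm
    _ ≤ ∑ j, ψ j x := Finset.single_le_sum (fun j _ => hψ0 j x) (Finset.mem_univ i)

theorem exists_continuous_integral_eq_one {X : Type*} [TopologicalSpace X] [R1Space X]
    [LocallyCompactSpace X] [MeasurableSpace X] [OpensMeasurableSpace X] (μ : Measure X)
    [μ.IsOpenPosMeasure] [IsFiniteMeasureOnCompacts μ] {x : X} {W : Set X} (hW : W ∈ 𝓝 x) :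
    ∃ g : X → ℝ, Continuous g ∧ HasCompactSupport g ∧ tsupport g ⊆ W ∧ 0 ≤ g ∧
      ∫ y, g y ∂μ = 1 := by
  obtain ⟨φ, hφx, hφc, hφW, hφI⟩ := exists_continuousMap_one_of_isCompact_subset_isOpen
    isCompact_singleton isOpen_interior
    (Set.singleton_subset_iff.2 (mem_interior_iff_mem_nhds.2 hW))
  have hφ0 : 0 ≤ (φ : X → ℝ) := fun y => (hφI y).1
  have hint : 0 < ∫ y, φ y ∂μ :=
    φ.2.integral_pos_of_hasCompactSupport_nonneg_nonzero (x := x) hφc hφ0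
      (by rw [hφx (Set.mem_singleton x)]; exact one_ne_zero)
  refine ⟨fun y => (∫ y, φ y ∂μ)⁻¹ * φ y, continuous_const.mul φ.2,
    HasCompactSupport.mul_left hφc,
    tsupport_mul_subset_right.trans (hφW.trans interior_subset),
    fun y => mul_nonneg (inv_nonneg.2 hint.le) (hφ0 y), ?_⟩
  rw [integral_const_mul, inv_mul_cancel₀ hint.ne']

section RegularCoeff

variable {G : Type*} [Group G] [MeasurableSpace G]

/-- The coefficient `p ↦ ⟨λ_{p⁻¹} f, g⟩` of the left regular representation. -/
noncomputable def regularCoeff (μ : Measure G) (g f : G → ℝ) (p : G) : ℝ :=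
  ∫ q, g (p⁻¹ * q) * f q ∂μ

variable {μ : Measure G} {g f : G → ℝ}

theorem regularCoeff_nonneg (hg : 0 ≤ g) (hf : 0 ≤ f) : 0 ≤ regularCoeff μ g f :=
  fun _ => integral_nonneg fun q => mul_nonneg (hg _) (hf q)

theorem regularCoeff_eq_integral_mul_left [MeasurableMul G] [μ.IsMulLeftInvariant] (p : G) :
    regularCoeff μ g f p = ∫ s, g s * f (p * s) ∂μ := by
  rw [regularCoeff, ← integral_mul_left_eq_self _ p]
  simp only [inv_mul_cancel_left]

theorem regularCoeff_eq_integral [MeasurableMul G] [μ.IsMulLeftInvariant] {p : G}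
    (hf1 : ∀ s ∈ support g, f (p * s) = 1) : regularCoeff μ g f p = ∫ s, g s ∂μ := by
  rw [regularCoeff_eq_integral_mul_left]
  refine integral_congr_ae (ae_of_all _ fun s => ?_)
  by_cases hs : g s = 0
  · simp [hs]
  · simp [hf1 s hs]

variable [TopologicalSpace G]

theorem support_regularCoeff_subset :
    support (regularCoeff μ g f) ⊆ tsupport f * (tsupport g)⁻¹ := by
  intro p hp
  by_contra hpS
  refine hp ?_
  have : (fun q => g (p⁻¹ * q) * f q) = 0 := by
    funext q
    by_contra hq
    obtain ⟨hgq, hfq⟩ := mul_ne_zero_iff.1 hq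
    refine hpS ⟨q, subset_tsupport f hfq, (p⁻¹ * q)⁻¹, ?_, by group⟩
    simpa using subset_tsupport g hgq
  simp [regularCoeff, this]

variable [IsTopologicalGroup G]

theorem hasCompactSupport_regularCoeff (hg : HasCompactSupport g) (hf : HasCompactSupport f) :
    HasCompactSupport (regularCoeff μ g f) :=
  .of_support_subset_isCompact (hf.mul hg.inv) support_regularCoeff_subset

theorem tsupport_regularCoeff_subset (hg : HasCompactSupport g) (hf : HasCompactSupport f)
    {U : Set G} (hU : IsOpen U) (hfgU : tsupport f * (tsupport g)⁻¹ ⊆ U) :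
    tsupport (regularCoeff μ g f) ⊆ U :=
  (closure_mono support_regularCoeff_subset).trans
    ((hf.mul hg.inv).closure_subset_of_isOpen hU hfgU)

variable [BorelSpace G] [IsFiniteMeasureOnCompacts μ]

theorem continuous_regularCoeff [μ.IsMulLeftInvariant] (hg : Continuous g)
    (hgc : HasCompactSupport g) (hf : Continuous f) : Continuous (regularCoeff μ g f) := by
  rw [funext regularCoeff_eq_integral_mul_left, ← continuousOn_univ]
  refine continuousOn_integral_of_compact_support hgc ?_ fun p s _ hs => ?_
  · exact ((hg.comp continuous_snd).mul (hf.comp continuous_mul)).continuousOn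
  · simp [image_eq_zero_of_notMem_tsupport hs]

theorem sum_regularCoeff {ι : Type*} (s : Finset ι) {f : ι → G → ℝ} (hg : Continuous g)
    (hgc : HasCompactSupport g) (hf : ∀ i, Continuous (f i)) (p : G) :
    ∑ i ∈ s, regularCoeff μ g (f i) p = regularCoeff μ g (fun q => ∑ i ∈ s, f i q) p := by
  have hint (i : ι) : Integrable (fun q => g (p⁻¹ * q) * f i q) μ :=
    ((hg.comp (continuous_const_mul p⁻¹)).mul (hf i)).integrable_of_hasCompactSupport
      (hgc.comp_homeomorph (Homeomorph.mulLeft p⁻¹)).mul_right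
  simp only [regularCoeff, ← integral_finsetSum s fun i _ => hint i, Finset.mul_sum]

theorem regularCoeff_le_integral [μ.IsMulLeftInvariant] (hg : Continuous g)
    (hgc : HasCompactSupport g) (hg0 : 0 ≤ g) (hf : Continuous f) (hf1 : ∀ q, f q ≤ 1)
    (p : G) : regularCoeff μ g f p ≤ ∫ s, g s ∂μ := by
  rw [regularCoeff_eq_integral_mul_left]
  refine integral_mono
    ((hg.mul (hf.comp (continuous_const_mul p))).integrable_of_hasCompactSupport hgc.mul_right)
    (hg.integrable_of_hasCompactSupport hgc) fun s => ?_
  simpa using mul_le_mul_of_nonneg_left (hf1 (p * s)) (hg0 s)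

end RegularCoeff

/-- a compact subset `K` of a locally compact group `G` with a finite open
cover `E₁, …, Eₙ` admits a subordinate partition of unity `h₁, …, hₙ` consisting of
convolution coefficient functions `hᵢ(p) = ∫ g(p⁻¹q) fᵢ(q) dq` (so each `hᵢ` lies in
`K(G) ∩ A(G)`). -/
theorem statement_18 {G : Type*} [Group G] [TopologicalSpace G] [IsTopologicalGroup G]
    [LocallyCompactSpace G] [MeasurableSpace G] [BorelSpace G]
    (μ : Measure G) [μ.IsHaarMeasure]
    (K : Set G) (hK : IsCompact K) (n : ℕ) (E : Fin n → Set G)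
    (hEopen : ∀ i, IsOpen (E i)) (hcover : K ⊆ ⋃ i, E i) :
    ∃ h : Fin n → G → ℝ,
      (∀ i, Continuous (h i) ∧ HasCompactSupport (h i) ∧
        tsupport (h i) ⊆ E i ∧ ∀ p, 0 ≤ h i p) ∧
      (∀ p : G, 0 ≤ ∑ i, h i p ∧ ∑ i, h i p ≤ 1) ∧
      (∀ p ∈ K, ∑ i, h i p = 1) ∧
      ∃ g : G → ℝ, ∃ f : Fin n → G → ℝ,
        Continuous g ∧ HasCompactSupport g ∧ (∀ q, 0 ≤ g q) ∧
        (∀ i, Continuous (f i) ∧ HasCompactSupport (f i) ∧ ∀ q, 0 ≤ f i q) ∧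
        ∀ i p, h i p = ∫ q, g (p⁻¹ * q) * f i q ∂μ := by
  obtain ⟨k, hk, hkc, hkE, hk0, hk_le, hk_one⟩ :=
    exists_continuous_sum_eq_one_eventually_nhdsSet hK hEopen hcover
  obtain ⟨O, hO, hKO, hO_one⟩ := mem_nhdsSet_iff_exists.1 hk_one
  obtain ⟨V, hV, hKV⟩ := compact_open_separated_mul_right hK hO hKO
  choose V' hV' hkV' using fun i => compact_open_separated_mul_right (hkc i) (hEopen i) (hkE i)
  obtain ⟨g, hg, hgc, hgW, hg0, hg1⟩ := exists_continuous_integral_eq_one μ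
    (Filter.inter_mem hV (Filter.iInter_mem.2 fun i => inv_mem_nhds_one G (hV' i)))
  have hgk (i : Fin n) : tsupport (k i) * (tsupport g)⁻¹ ⊆ E i :=
    (Set.mul_subset_mul_left (Set.inv_subset.2 fun s hs =>
      Set.mem_iInter.1 (hgW hs).2 i)).trans (hkV' i)
  refine ⟨fun i => regularCoeff μ g (k i), fun i => ⟨continuous_regularCoeff hg hgc (hk i),
    hasCompactSupport_regularCoeff hgc (hkc i), tsupport_regularCoeff_subset hgc (hkc i)
    (hEopen i) (hgk i), regularCoeff_nonneg hg0 (hk0 i)⟩, fun p => ⟨?_, ?_⟩, fun p hp => ?_,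
    g, k, hg, hgc, hg0, fun i => ⟨hk i, hkc i, hk0 i⟩, fun i p => rfl⟩
  · exact Finset.sum_nonneg fun i _ => regularCoeff_nonneg hg0 (hk0 i) p
  · rw [sum_regularCoeff _ hg hgc hk, ← hg1]
    exact regularCoeff_le_integral hg hgc hg0 (continuous_finsetSum _ fun i _ => hk i) hk_le p
  · rw [sum_regularCoeff _ hg hgc hk, regularCoeff_eq_integral, hg1]
    intro s hs
    simpa using hO_one (hKV (Set.mul_mem_mul hp (hgW (subset_tsupport g hs)).1))
end
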